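/- arXiv:1605.06918 — 2 statements merged into one kernel-verified Lean document; each statement's English description precedes it below -/
import Mathlib

section
/- For any graph G of order n, any minimum-weight Roman dominating function f = (B_0, B_1, B_2) on G, and any integer t ≥ 2: γ_R(S(G,t)) ≤ n^{t-2}(n·γ_R(G) − |B_2|). -/
variable {V : Type*}

/-- A Roman dominating function: every vertex with value 0 has a neighbor with value 2. -/
def IsRDF (G : SimpleGraph V) (f : V → Fin 3) : Prop :=
  ∀ v, f v = 0 → ∃ u, G.Adj u v ∧ f u = 2

/-- The weight of a Roman dominating function. -/
def romanWeight [Fintype V] (f : V → Fin 3) : ℕ := ∑ v, (f v : ℕ)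

/-- The Roman domination number. -/
noncomputable def gammaR [Fintype V] (G : SimpleGraph V) : ℕ :=
  sInf {k | ∃ f : V → Fin 3, IsRDF G f ∧ romanWeight f = k}

/-- A dominating set. -/
def IsDomSet (G : SimpleGraph V) (D : Set V) : Prop :=
  ∀ v, v ∈ D ∨ ∃ u ∈ D, G.Adj u v

/-- The domination number. -/
noncomputable def gamma [Fintype V] (G : SimpleGraph V) : ℕ :=
  sInf {k | ∃ D : Set V, IsDomSet G D ∧ D.ncard = k}

/-- The generalized Sierpiński graph `S(G,t)` on words of length `t` over `V`. -/
def sierpinski (G : SimpleGraph V) (t : ℕ) : SimpleGraph (Fin t → V) where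
  Adj x y := ∃ i : Fin t, (∀ j, j < i → x j = y j) ∧ G.Adj (x i) (y i) ∧
    (∀ j, i < j → x j = y i ∧ y j = x i)
  symm := by
    constructor
    rintro x y ⟨i, h1, h2, h3⟩
    exact ⟨i, fun j hj => (h1 j hj).symm, h2.symm, fun j hj => ⟨(h3 j hj).2, (h3 j hj).1⟩⟩
  loopless := by
    constructor
    rintro x ⟨i, -, h2, -⟩
    exact G.loopless.irrefl _ h2

/-!
Put `g(wx) = f(x)` on the last letter, and lower `g(wuu)` from 2 to 1 for `u ∈ B₂`. A word ending
in `v ∈ B₀` has a neighbour in `S(G,t)` ending in some `u ∈ B₂` adjacent to `v` in `G` whose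
second-to-last letter is not `u`: change the last letter to `u`, or, if the second-to-last letter
already is `u`, swap the last two letters. That neighbour keeps the value 2, so `g` is Roman
dominating. Each `x` is the last letter of `n^(t-1)` words, giving weight `n^(t-1) γ_R(G)`, and
there are `n^(t-2) |B₂|` words `wuu` with `u ∈ B₂`, each of which lost 1.
-/

open Finset

section WordSums

variable {ι W : Type*} [Fintype ι] [DecidableEq ι] [Fintype W]

theorem sum_comp_eval (i : ι) (F : W → ℕ) :
    ∑ x : ι → W, F (x i) = Fintype.card W ^ (Fintype.card ι - 1) * ∑ w, F w := by
  rw [← (Equiv.funSplitAt i W).symm.sum_comp, Fintype.sum_prod_type]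
  have hcard : Fintype.card {j : ι // j ≠ i} = Fintype.card ι - 1 := by
    rw [Fintype.card_subtype_compl, Fintype.card_subtype_eq]
  simp [Equiv.funSplitAt_symm_apply, hcard, sum_mul, mul_comm]

theorem sum_comp_eval₂ {i j : ι} (hij : i ≠ j) (F : W → W → ℕ) :
    ∑ x : ι → W, F (x i) (x j) =
      Fintype.card W ^ (Fintype.card ι - 2) * ∑ v, ∑ u, F u v := by
  rw [← (Equiv.funSplitAt j W).symm.sum_comp, Fintype.sum_prod_type]
  have hcard : Fintype.card {k : ι // k ≠ j} = Fintype.card ι - 1 := by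
    rw [Fintype.card_subtype_compl, Fintype.card_subtype_eq]
  have inner (v : W) : ∑ r : {k : ι // k ≠ j} → W, F (r ⟨i, hij⟩) v
      = Fintype.card W ^ (Fintype.card ι - 2) * ∑ u, F u v := by
    rw [sum_comp_eval _ (F · v), hcard, Nat.sub_sub]
  simp [Equiv.funSplitAt_symm_apply, hij, inner, mul_sum]

end WordSums

theorem IsRDF.gammaR_le_romanWeight [Fintype V] {G : SimpleGraph V} {f : V → Fin 3}
    (hf : IsRDF G f) :
    gammaR G ≤ romanWeight f :=
  Nat.sInf_le ⟨f, hf, rfl⟩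

section Sierpinski

variable {G : SimpleGraph V} {s : ℕ}

theorem sierpinski_adj_update_last [DecidableEq V] {x : Fin (s + 1) → V} {u : V}
    (h : G.Adj (x (Fin.last s)) u) :
    (sierpinski G (s + 1)).Adj x (Function.update x (Fin.last s) u) :=
  ⟨Fin.last s, fun j hj => (Function.update_of_ne hj.ne _ _).symm, by simpa using h,
    fun j hj => absurd hj (Fin.le_last j).not_gt⟩

theorem sierpinski_adj_comp_swap_last_two {x : Fin (s + 2) → V}
    (h : G.Adj (x (Fin.last s).castSucc) (x (Fin.last (s + 1)))) :
    (sierpinski G (s + 2)).Adj x (x ∘ Equiv.swap (Fin.last s).castSucc (Fin.last (s + 1))) := by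
  refine ⟨(Fin.last s).castSucc, fun j hj => ?_, by simpa using h, fun j hj => ?_⟩
  · rw [Function.comp_apply, Equiv.swap_apply_of_ne_of_ne hj.ne]
    exact (hj.trans (Fin.castSucc_lt_last _)).ne
  · obtain rfl : j = Fin.last (s + 1) := Fin.ext (by simp [Fin.lt_def] at hj ⊢; omega)
    simp

end Sierpinski

section Lift

variable [DecidableEq V] {s : ℕ}

def sierpinskiLift (f : V → Fin 3) (x : Fin (s + 2) → V) : Fin 3 :=
  if x (Fin.last s).castSucc = x (Fin.last (s + 1)) ∧ f (x (Fin.last (s + 1))) = 2 then 1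
  else f (x (Fin.last (s + 1)))

theorem sierpinskiLift_of_ne {f : V → Fin 3} {x : Fin (s + 2) → V}
    (h : x (Fin.last s).castSucc ≠ x (Fin.last (s + 1))) :
    sierpinskiLift f x = f (x (Fin.last (s + 1))) :=
  if_neg (fun h' => h h'.1)

theorem IsRDF.sierpinskiLift {G : SimpleGraph V} {f : V → Fin 3} (hf : IsRDF G f) :
    IsRDF (sierpinski G (s + 2)) (sierpinskiLift f) := by
  intro x hx
  have hfx : f (x (Fin.last (s + 1))) = 0 := by
    unfold _root_.sierpinskiLift at hx
    split_ifs at hx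
    · exact absurd hx one_ne_zero
    · exact hx
  obtain ⟨u, hu, hfu⟩ := hf _ hfx
  by_cases hpu : x (Fin.last s).castSucc = u
  · refine ⟨_, (sierpinski_adj_comp_swap_last_two (hpu ▸ hu)).symm, ?_⟩
    rw [sierpinskiLift_of_ne] <;> simp [hpu, hfu, hu.ne']
  · refine ⟨_, (sierpinski_adj_update_last hu.symm).symm, ?_⟩
    rw [sierpinskiLift_of_ne] <;> simp [hpu, hfu]

theorem romanWeight_sierpinskiLift [Fintype V] (f : V → Fin 3) :
    romanWeight (sierpinskiLift (s := s) f) + Fintype.card V ^ s * {v | f v = 2}.ncard =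
      Fintype.card V ^ (s + 1) * romanWeight f := by
  have pointwise (x : Fin (s + 2) → V) : (sierpinskiLift f x : ℕ) +
      (if x (Fin.last s).castSucc = x (Fin.last (s + 1)) ∧ f (x (Fin.last (s + 1))) = 2
        then 1 else 0) = f (x (Fin.last (s + 1))) := by
    unfold _root_.sierpinskiLift
    split_ifs with h
    · simp [h.2]
    · rfl
  have hB₂ : ∑ v, ∑ u, (if u = v ∧ f v = 2 then 1 else 0) = {v | f v = 2}.ncard := by
    rw [Set.ncard_eq_toFinset_card', Set.toFinset_ofPred, card_filter]
    simp [ite_and]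
  have hB := sum_comp_eval₂ (ι := Fin (s + 2)) (W := V) (Fin.castSucc_lt_last (Fin.last s)).ne
    (fun u v => if u = v ∧ f v = 2 then 1 else 0)
  have hF := sum_comp_eval (ι := Fin (s + 2)) (Fin.last (s + 1)) (fun v => (f v : ℕ))
  simp only [Fintype.card_fin, Nat.add_sub_cancel, Nat.add_succ_sub_one] at hB hF
  rw [romanWeight, romanWeight, ← hB₂, ← hB, ← hF, ← sum_add_distrib]
  exact sum_congr rfl fun x _ => pointwise x

end Lift

theorem stmt8 [Fintype V] (G : SimpleGraph V) (n : ℕ) (hn : Fintype.card V = n)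
    (f : V → Fin 3) (hf : IsRDF G f) (hmin : romanWeight f = gammaR G)
    (t : ℕ) (ht : 2 ≤ t) :
    gammaR (sierpinski G t) ≤ n ^ (t - 2) * (n * gammaR G - {v | f v = 2}.ncard) := by
  classical
  obtain ⟨s, rfl⟩ := Nat.exists_eq_add_of_le' ht
  have hweight := romanWeight_sierpinskiLift (s := s) f
  rw [hn, hmin, pow_succ, mul_assoc] at hweight
  calc gammaR (sierpinski G (s + 2))
      ≤ romanWeight (sierpinskiLift f) := hf.sierpinskiLift.gammaR_le_romanWeight
    _ = n ^ s * (n * gammaR G) - n ^ s * {v | f v = 2}.ncard := by omega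
    _ = n ^ (s + 2 - 2) * (n * gammaR G - {v | f v = 2}.ncard) := by
      rw [Nat.add_sub_cancel, Nat.mul_sub]
end

section
/- For integers n ≥ 2 and t ≥ 1: γ_R(S(K_n,t)) ≤ (2n^t + n − 1)/(n+1) if t is even, and γ_R(S(K_n,t)) ≤ 2(n^t + 1)/(n+1) if t is odd. -/
variable {V : Type*}

/-!
Call `code σ t` the set of words of length `t` on which a four-state automaton started in `σ`
ends in its accepting state. Reading the first letter `a` moves to the copy `a·S(K_n, t-1)`,
so `code σ t` is assembled from the sets `code (σ.next a) (t-1)` in the `n` copies, and the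
edges bridging the copies dominate the extreme vertices that these leave out. The same one-letter
recursion gives `(n+1)·#code = n^t + e` with `e ∈ {±1, ±n}`. For `t` odd, value `2` on a code
dominating everything gives `2(n^t+1)/(n+1)`; for `t` even, value `2` on a code dominating all
but `z^t`, plus value `1` at `z^t`, gives `(2n^t+n-1)/(n+1)`.
-/

open Finset

theorem gammaR_le_of_dominating [Fintype V] (G : SimpleGraph V) (D E : Finset V)
    (h : ∀ v ∉ D, v ∉ E → ∃ u ∈ D, G.Adj u v) : gammaR G ≤ 2 * #D + #E := by
  classical
  let f : V → Fin 3 := fun v => if v ∈ D then 2 else if v ∈ E then 1 else 0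
  have hf : IsRDF G f := by
    intro v hv
    have hvD : v ∉ D := fun hvD => by simp [f, hvD] at hv
    have hvE : v ∉ E := fun hvE => by simp [f, hvD, hvE] at hv
    obtain ⟨u, huD, hu⟩ := h v hvD hvE
    exact ⟨u, hu, by simp [f, huD]⟩
  have hweight : romanWeight f ≤ 2 * #D + #E := calc
    romanWeight f ≤ ∑ v, (2 * (if v ∈ D then 1 else 0) + (if v ∈ E then 1 else 0)) := by
      refine sum_le_sum fun v _ => ?_
      by_cases hvD : v ∈ D <;> by_cases hvE : v ∈ E <;> simp [f, hvD, hvE]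
    _ = 2 * #D + #E := by
      simp only [sum_add_distrib, ← mul_sum, sum_boole, filter_mem_eq_inter, univ_inter,
        Nat.cast_id]
  exact (Nat.sInf_le ⟨f, hf, rfl⟩ : gammaR G ≤ romanWeight f).trans hweight

namespace SimpleGraph

variable {W : Type*} (G : SimpleGraph W)

theorem sierpinski_adj_cons {t : ℕ} (a : W) {x y : Fin t → W} (h : (sierpinski G t).Adj x y) :
    (sierpinski G (t + 1)).Adj (Fin.cons a x) (Fin.cons a y) := by
  obtain ⟨i, hbefore, hi, hafter⟩ := h
  refine ⟨i.succ, fun j hj => ?_, by simpa using hi, fun j hj => ?_⟩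
  · cases j using Fin.cases with
    | zero => rfl
    | succ j => simpa using hbefore j (Fin.succ_lt_succ_iff.mp hj)
  · cases j using Fin.cases with
    | zero => exact absurd hj (Fin.succ_pos i).not_gt
    | succ j => simpa using hafter j (Fin.succ_lt_succ_iff.mp hj)

theorem sierpinski_adj_cons_const {t : ℕ} {a b : W} (h : G.Adj a b) :
    (sierpinski G (t + 1)).Adj (Fin.cons a fun _ => b) (Fin.cons b fun _ => a) := by
  refine ⟨0, fun j hj => absurd hj (Fin.not_lt_zero j), by simpa using h, fun j hj => ?_⟩
  cases j using Fin.cases with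
  | zero => exact absurd hj (lt_irrefl 0)
  | succ j => simp

end SimpleGraph

theorem Fin.cons_const {W : Type*} (c : W) {t : ℕ} :
    (Fin.cons c fun _ : Fin t => c) = fun _ => c := by
  funext i
  cases i using Fin.cases <;> rfl

theorem sum_ite_eq_add_card_sub_one_mul {W : Type*} [Fintype W] [DecidableEq W] (s : W)
    (X Y : ℤ) :
    ∑ a, (if a = s then X else Y) = X + (Fintype.card W - 1) * Y := by
  rw [Fintype.sum_eq_add_sum_compl s, if_pos rfl,
    sum_congr rfl fun a ha => if_neg (by simpa using ha), sum_const, card_compl, card_singleton,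
    nsmul_eq_mul, Nat.cast_sub (Fintype.card_pos_iff.mpr ⟨s⟩), Nat.cast_one]

namespace SierpinskiCode

open SimpleGraph

/- The states name four kinds of dominating sets of `S(K_W, t)`:
* `hitAll` (`t` even): dominates everything and contains every extreme vertex `c^t`;
* `hit s` (`t` odd): dominates everything and contains `s^t`;
* `miss s` (`t` even): dominates everything except `s^t`;
* `missAll` (`t` odd): dominates everything except the extreme vertices.
A set of kind `σ` restricted to the copy `a·S(K_W, t-1)` is of kind `σ.next a`; the bridging
edges `a b^(t-1) ~ b a^(t-1)` dominate the extreme vertices that a copy leaves out. -/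
inductive State (W : Type*) where
  | hitAll : State W
  | hit : W → State W
  | miss : W → State W
  | missAll : State W
  deriving DecidableEq

variable {W : Type*} [DecidableEq W]

namespace State

def next : State W → W → State W
  | hitAll, a => hit a
  | hit s, a => if a = s then hitAll else miss s
  | miss s, a => if a = s then missAll else hit s
  | missAll, a => miss a

def parity : State W → ℕ
  | hitAll => 0
  | hit _ => 1
  | miss _ => 0
  | missAll => 1

def excess (q : ℤ) : State W → ℤ
  | hitAll => q
  | hit _ => 1
  | miss _ => -1
  | missAll => -q

theorem parity_next_add_parity (σ : State W) (a : W) : (σ.next a).parity + σ.parity = 1 := by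
  cases σ <;> simp only [next] <;> (try split_ifs) <;> rfl

end State

open State

def run : {t : ℕ} → State W → (Fin t → W) → State W
  | 0, σ, _ => σ
  | _ + 1, σ, x => run (σ.next (x 0)) (Fin.tail x)

@[simp]
theorem run_cons {t : ℕ} (σ : State W) (a : W) (x : Fin t → W) :
    run σ (Fin.cons a x) = run (σ.next a) x := by
  simp [run]

theorem run_hitAll_const (c : W) :
    ∀ {t : ℕ}, t % 2 = 0 → run hitAll (fun _ : Fin t => c) = hitAll
  | 0, _ => rfl
  | 1, h => absurd h (by decide)
  | t + 2, h => by
    change run ((hitAll.next c).next c) (fun _ : Fin t => c) = hitAll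
    simpa [next] using run_hitAll_const c (t := t) (by omega)

theorem run_hit_const (s : W) {t : ℕ} (h : t % 2 = 1) :
    run (hit s) (fun _ : Fin t => s) = hitAll := by
  obtain ⟨t, rfl⟩ : ∃ t', t = t' + 1 := ⟨t - 1, by omega⟩
  change run ((hit s).next s) (fun _ : Fin t => s) = hitAll
  simpa [next] using run_hitAll_const s (t := t) (by omega)

variable [Fintype W]

def code (σ : State W) (t : ℕ) : Finset (Fin t → W) := {x | run σ x = hitAll}

theorem card_code_succ (σ : State W) (t : ℕ) :
    #(code σ (t + 1)) = ∑ a, #(code (σ.next a) t) := by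
  simp only [code, card_filter]
  rw [← (Fin.consEquiv fun _ => W).sum_comp, Fintype.sum_prod_type]
  simp [Fin.consEquiv]

theorem sum_excess_next (σ : State W) :
    ∑ a, (σ.next a).excess (Fintype.card W) = σ.excess (Fintype.card W) := by
  cases σ with
  | hitAll | missAll => simp [next, excess]
  | hit s | miss s =>
    simp only [next, apply_ite (excess (W := W) (Fintype.card W))]
    simp only [excess, sum_ite_eq_add_card_sub_one_mul]
    ring

theorem card_code (σ : State W) (t : ℕ) (h : σ.parity = t % 2) :
    (Fintype.card W + 1) * (#(code σ t) : ℤ) =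
      Fintype.card W ^ t + σ.excess (Fintype.card W) := by
  induction t generalizing σ with
  | zero =>
    cases σ <;> simp_all [code, run, parity, excess, add_comm]
  | succ t ih =>
    have hnext a : (Fintype.card W + 1) * (#(code (σ.next a) t) : ℤ) =
        Fintype.card W ^ t + (σ.next a).excess (Fintype.card W) :=
      ih _ (by have := σ.parity_next_add_parity a; omega)
    rw [card_code_succ, Nat.cast_sum, mul_sum, sum_congr rfl fun a _ => hnext a, sum_add_distrib,
      sum_excess_next, sum_const, card_univ, nsmul_eq_mul, pow_succ]
    ring

def exempt : State W → (t : ℕ) → Finset (Fin t → W)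
  | miss s, _ => {fun _ => s}
  | missAll, _ => univ.image fun c _ => c
  | _, _ => ∅

def Dominates (σ : State W) (t : ℕ) : Prop :=
  ∀ x ∉ code σ t, x ∉ exempt σ t →
    ∃ y ∈ code σ t, (sierpinski (completeGraph W) t).Adj y x

theorem Dominates.succ {σ : State W} {t : ℕ} (hnext : ∀ a, Dominates (σ.next a) t)
    (hexempt : ∀ a, ∀ x ∈ exempt (σ.next a) t, Fin.cons a x ∈ exempt σ (t + 1) ∨
      ∃ y ∈ code σ (t + 1), (sierpinski (completeGraph W) (t + 1)).Adj y (Fin.cons a x)) :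
    Dominates σ (t + 1) := by
  intro x hx hxe
  obtain ⟨a, r, rfl⟩ : ∃ a r, x = Fin.cons a r :=
    ⟨x 0, Fin.tail x, (Fin.cons_self_tail x).symm⟩
  have hr : r ∉ code (σ.next a) t := by simpa [code] using hx
  by_cases hre : r ∈ exempt (σ.next a) t
  · exact (hexempt a r hre).resolve_left hxe
  · obtain ⟨y, hy, hadj⟩ := hnext a r hr hre
    exact ⟨Fin.cons a y, by simpa [code] using hy, sierpinski_adj_cons _ a hadj⟩

theorem exempt_next_dominated {σ : State W} {t : ℕ} (h : σ.parity = (t + 1) % 2) (a : W) :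
    ∀ x ∈ exempt (σ.next a) t, Fin.cons a x ∈ exempt σ (t + 1) ∨
      ∃ y ∈ code σ (t + 1), (sierpinski (completeGraph W) (t + 1)).Adj y (Fin.cons a x) := by
  intro x hx
  cases σ with
  | hitAll => simp [next, exempt] at hx
  | hit s =>
    by_cases ha : a = s
    · simp [next, ha, exempt] at hx
    simp only [next, ha, if_false, exempt, mem_singleton] at hx
    subst hx
    refine .inr ⟨Fin.cons s fun _ => a, ?_, sierpinski_adj_cons_const _ (Ne.symm ha)⟩
    simpa [code, next] using run_hitAll_const a (by simp only [parity] at h; omega)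
  | miss s =>
    by_cases ha : a = s
    · subst ha
      obtain ⟨c, rfl⟩ : ∃ c, x = fun _ => c := by simpa [next, exempt, eq_comm] using hx
      by_cases hc : c = a
      · subst hc
        simp [exempt, Fin.cons_const]
      refine .inr ⟨Fin.cons c fun _ => a, ?_, sierpinski_adj_cons_const _ hc⟩
      simpa [code, next, hc] using run_hit_const a (by simp only [parity] at h; omega)
    · simp [next, ha, exempt] at hx
  | missAll =>
    simp only [next, exempt, mem_singleton] at hx
    subst hx
    exact .inl (by simp [exempt, Fin.cons_const])

theorem dominates_of_parity (σ : State W) (t : ℕ) (h : σ.parity = t % 2) : Dominates σ t := by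
  induction t generalizing σ with
  | zero =>
    intro x hx hxe
    cases σ with
    | hitAll => exact absurd (by simp [code, run, eq_iff_true_of_subsingleton]) hx
    | miss s => exact absurd (by simp [exempt, eq_iff_true_of_subsingleton]) hxe
    | hit _ | missAll => simp [parity] at h
  | succ t ih =>
    exact .succ (fun a => ih _ (by have := σ.parity_next_add_parity a; omega))
      (exempt_next_dominated h)

theorem gammaR_sierpinski_le (σ : State W) (t : ℕ) (h : σ.parity = t % 2) :
    gammaR (sierpinski (completeGraph W) t) ≤ 2 * #(code σ t) + #(exempt σ t) :=
  gammaR_le_of_dominating _ _ _ (dominates_of_parity σ t h)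

end SierpinskiCode

open SierpinskiCode State in
theorem stmt17_general (n t : ℕ) (hn : 2 ≤ n) :
    (Even t → (n + 1) * gammaR (sierpinski (SimpleGraph.completeGraph (Fin n)) t) ≤ 2 * n ^ t + n - 1) ∧
    (Odd t → (n + 1) * gammaR (sierpinski (SimpleGraph.completeGraph (Fin n)) t) ≤ 2 * (n ^ t + 1)) := by
  let z : Fin n := ⟨0, by omega⟩
  constructor
  · intro ht
    have hpow : 1 ≤ n ^ t := Nat.one_le_pow _ _ (by omega)
    have hpar : (miss z).parity = t % 2 := by simp [parity, Nat.even_iff.mp ht]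
    have hle := Nat.mul_le_mul_left (n + 1) (gammaR_sierpinski_le (miss z) t hpar)
    have hcard := card_code (miss z) t hpar
    simp only [exempt, Finset.card_singleton, Fintype.card_fin, excess] at hle hcard
    zify [show 1 ≤ 2 * n ^ t + n by omega] at hle ⊢
    linarith
  · intro ht
    have hpar : (hit z).parity = t % 2 := by simp [parity, Nat.odd_iff.mp ht]
    have hle := Nat.mul_le_mul_left (n + 1) (gammaR_sierpinski_le (hit z) t hpar)
    have hcard := card_code (hit z) t hpar
    simp only [exempt, Finset.card_empty, add_zero, Fintype.card_fin, excess] at hle hcard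
    zify at hle ⊢
    linarith

theorem stmt17 (n t : ℕ) (hn : 2 ≤ n) (ht : 1 ≤ t) :
    (Even t → (n + 1) * gammaR (sierpinski (SimpleGraph.completeGraph (Fin n)) t) ≤ 2 * n ^ t + n - 1) ∧
    (Odd t → (n + 1) * gammaR (sierpinski (SimpleGraph.completeGraph (Fin n)) t) ≤ 2 * (n ^ t + 1)) :=
  stmt17_general n t hn
end
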